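/- arXiv:2312.07989 — 5 statements merged into one kernel-verified Lean document; each statement's English description precedes it below -/
import Mathlib

section
/- Let X be an RDS in a finite group G with forbidden subgroup N and parameters (m,n,k,λ). Then X·X^{(-1)} = X^{(-1)}·X in ZG (X is i-commuting) if and only if X·N = N·X in ZG, where a set denotes the sum of its elements. -/
open Finset MonoidAlgebra

/-!
Write `A = X`, `B = X⁽⁻¹⁾` and `D = BA - AB`. Since the sum `G` is central in `ℤG`, the RDS
equation `λN = k + λG - AB` gives `λ(AN - NA) = AD`, so `AB = BA` forces `AN = NA` (`ℤG` is
torsion-free). Conversely, if `AN = NA` then `AD = 0`; the antipode `g ↦ g⁻¹` fixes `D` and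
reverses products, so also `DB = 0`, and then `D² = AE - EA` with `E = ABB`. The coefficient of
`1` in `DD⁽⁻¹⁾ = D²` is `0`, as for any commutator, but it is also the sum of the squares of the
coefficients of `D`; hence `D = 0`.
-/

/-- The element of the integral group ring `ℤG` given by the sum of the elements of `X`. -/
noncomputable def gsum {G : Type*} [Group G] (X : Finset G) : MonoidAlgebra ℤ G :=
  ∑ x ∈ X, MonoidAlgebra.single x (1 : ℤ)

lemma nsmul_commutator_eq_of_mul_eq {R : Type*} [Ring R] {a b c z : R} {k l : ℕ}
    (hz : Commute a z) (h : a * b = k • 1 + l • (z - c)) :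
    l • (a * c - c * a) = a * (b * a - a * b) := by
  have hc : l • c = k • 1 + l • z - a * b := by rw [h, smul_sub]; abel
  calc l • (a * c - c * a) = a * (l • c) - (l • c) * a := by
        rw [smul_sub, mul_smul_comm, smul_mul_assoc]
    _ = l • (a * z - z * a) + a * (b * a - a * b) := by
        rw [hc]
        simp only [mul_sub, sub_mul, mul_add, add_mul, mul_smul_comm, smul_mul_assoc, mul_one,
          one_mul, smul_sub, mul_assoc]
        abel
    _ = a * (b * a - a * b) := by rw [hz.eq, sub_self, smul_zero, zero_add]

namespace MonoidAlgebra

open HopfAlgebra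

variable {R G : Type*} [Group G]

section CommSemiring

variable [CommSemiring R]

lemma antipode_antipode (x : MonoidAlgebra R G) : antipode R (antipode R x) = x := by
  induction x using induction_linear with
  | zero => simp
  | add x y hx hy => simp [hx, hy]
  | single g r => simp

lemma coeff_antipode (x : MonoidAlgebra R G) (g : G) : (antipode R x).coeff g = x.coeff g⁻¹ := by
  induction x using induction_linear with
  | zero => simp
  | add x y hx hy => simp [hx, hy]
  | single h r =>
    classical
    rw [antipode_single, CommSemiring.antipode_eq_id, LinearMap.id_apply, coeff_single,
      coeff_single, Finsupp.single_apply, Finsupp.single_apply, inv_eq_iff_eq_inv]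

lemma coeff_one_mul_comm (x y : MonoidAlgebra R G) : (x * y).coeff 1 = (y * x).coeff 1 := by
  induction x using induction_linear with
  | zero => simp
  | add x x' hx hx' => simp [add_mul, mul_add, hx, hx']
  | single g r =>
    induction y using induction_linear with
    | zero => simp
    | add y y' hy hy' => simp [add_mul, mul_add, hy, hy']
    | single h s =>
      classical
      rw [single_mul_single, single_mul_single, coeff_single, coeff_single, Finsupp.single_apply,
        Finsupp.single_apply, mul_comm r s]
      simp only [mul_eq_one_comm (a := g)]

end CommSemiring

section OrderedRing

variable [CommRing R] [LinearOrder R] [IsStrictOrderedRing R]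

lemma eq_zero_of_coeff_one_mul_antipode_self_eq_zero {x : MonoidAlgebra R G}
    (h : (x * antipode R x).coeff 1 = 0) : x = 0 := by
  simp only [coeff_mul_apply_left, coeff_antipode, mul_one, inv_inv, Finsupp.sum] at h
  have hsq := (Finset.sum_eq_zero_iff_of_nonneg fun g _ => mul_self_nonneg (x.coeff g)).mp h
  ext g
  by_contra hg
  exact hg (mul_self_eq_zero.mp (hsq g (Finsupp.mem_support_iff.mpr hg)))

theorem commute_antipode_of_mul_commutator_eq_zero {a : MonoidAlgebra R G}
    (h : a * (antipode R a * a - a * antipode R a) = 0) : Commute a (antipode R a) := by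
  set b := antipode R a
  set d := b * a - a * b
  have hd : antipode R d = d := by
    simp [d, b, antipode_mul_antidistrib, antipode_antipode]
  have hdb : d * b = 0 := by
    simpa [antipode_mul_antidistrib, hd] using congrArg (antipode R) h
  have hbab : b * a * b = a * b * b := sub_eq_zero.mp (by rw [← sub_mul]; exact hdb)
  have hdd : d * d = a * (a * b * b) - a * b * b * a :=
    calc d * d = b * (a * d) - a * b * d := by simp only [d]; noncomm_ring
      _ = a * (b * a * b) - a * b * b * a := by
          rw [h, mul_zero, zero_sub]; simp only [d]; noncomm_ring
      _ = a * (a * b * b) - a * b * b * a := by rw [hbab]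
  have : d = 0 := by
    refine eq_zero_of_coeff_one_mul_antipode_self_eq_zero ?_
    rw [hd, hdd, coeff_sub, Finsupp.sub_apply, coeff_one_mul_comm, sub_self]
  exact (sub_eq_zero.mp this).symm

end OrderedRing

end MonoidAlgebra

section GroupRing

variable {G : Type*} [Group G]

lemma antipode_gsum [DecidableEq G] (X : Finset G) :
    HopfAlgebra.antipode ℤ (gsum X) = gsum (X.image (·⁻¹)) := by
  rw [gsum, map_sum, gsum, Finset.sum_image inv_injective.injOn]
  simp

lemma coeff_gsum_univ [Fintype G] (g : G) : (gsum (univ : Finset G)).coeff g = 1 := by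
  classical simp [gsum, coeff_sum, Finsupp.single_apply]

lemma commute_gsum_univ [Fintype G] (x : MonoidAlgebra ℤ G) : Commute x (gsum univ) := by
  induction x using induction_linear with
  | zero => exact Commute.zero_left _
  | add x y hx hy => exact hx.add_left hy
  | single g r => ext h; simp [coeff_gsum_univ, mul_comm]

end GroupRing

theorem stmt2_general {G : Type*} [Group G] [Fintype G] [DecidableEq G]
    (N : Subgroup G) [DecidablePred (· ∈ N)]
    (X : Finset G) (k lam : ℕ) (hlam : 0 < lam)
    (hRDS : gsum X * gsum (X.image (·⁻¹)) =
      k • (1 : MonoidAlgebra ℤ G) +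
      lam • (gsum (Finset.univ : Finset G) - gsum (Finset.univ.filter (· ∈ N)))) :
    gsum X * gsum (X.image (·⁻¹)) = gsum (X.image (·⁻¹)) * gsum X ↔
      gsum X * gsum (Finset.univ.filter (· ∈ N)) =
        gsum (Finset.univ.filter (· ∈ N)) * gsum X := by
  rw [← antipode_gsum] at hRDS ⊢
  have key := nsmul_commutator_eq_of_mul_eq (commute_gsum_univ (gsum X)) hRDS
  have : IsAddTorsionFree (MonoidAlgebra ℤ G) :=
    Module.isTorsionFree_int_iff_isAddTorsionFree.mp inferInstance
  constructor
  · intro h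
    refine sub_eq_zero.mp (nsmul_right_injective hlam.ne' ?_)
    simp only [key, h, sub_self, mul_zero, smul_zero]
  · intro h
    exact (commute_antipode_of_mul_commutator_eq_zero (by rw [← key, h, sub_self, smul_zero])).eq

/-- An RDS `X` with forbidden subgroup `N` is i-commuting (`X·X⁽⁻¹⁾ = X⁽⁻¹⁾·X` in `ℤG`)
if and only if `X·N = N·X` in `ℤG`. -/
theorem stmt2 {G : Type*} [Group G] [Fintype G] [DecidableEq G]
    (N : Subgroup G) [DecidablePred (· ∈ N)]
    (X : Finset G) (k lam : ℕ) (hk : X.card = k) (hlam : 0 < lam)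
    (hRDS : gsum X * gsum (X.image (·⁻¹)) =
      k • (1 : MonoidAlgebra ℤ G) +
      lam • (gsum (Finset.univ : Finset G) - gsum (Finset.univ.filter (· ∈ N)))) :
    gsum X * gsum (X.image (·⁻¹)) = gsum (X.image (·⁻¹)) * gsum X ↔
      gsum X * gsum (Finset.univ.filter (· ∈ N)) =
        gsum (Finset.univ.filter (· ∈ N)) * gsum X :=
  stmt2_general N X k lam hlam hRDS
end

section
/- Let X be a semiregular RDS in a finite group G with forbidden subgroup N. Then N·X = G in ZG, i.e., X is a right transversal for N in G. -/
open Finset MonoidAlgebra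

section GroupRing

variable {G : Type*} [Group G]

lemma coeff_mul_gsum (a : MonoidAlgebra ℤ G) (B : Finset G) (g : G) :
    (a * gsum B).coeff g = ∑ b ∈ B, a.coeff (g * b⁻¹) := by
  simp [gsum, Finset.mul_sum, coeff_sum]

variable [DecidableEq G]

lemma coeff_gsum (X : Finset G) (g : G) : (gsum X).coeff g = if g ∈ X then 1 else 0 := by
  simp [gsum, coeff_sum, coeff_single, Finsupp.single_apply]

lemma coeff_gsum_mul_gsum (A B : Finset G) (g : G) :
    (gsum A * gsum B).coeff g = #{b ∈ B | g * b⁻¹ ∈ A} := by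
  simp [coeff_mul_gsum, coeff_gsum]

variable [Fintype G] {N : Subgroup G} [DecidablePred (· ∈ N)]

lemma gsum_filter_mem_mul_gsum_eq_univ {X : Finset G}
    (hX : ∀ g : G, ∃! x : G, x ∈ X ∧ x * g⁻¹ ∈ N) :
    gsum (univ.filter (· ∈ N)) * gsum X = gsum univ := by
  ext g
  obtain ⟨x, hx, hunique⟩ := hX g
  have hfilter : {b ∈ X | g * b⁻¹ ∈ univ.filter (· ∈ N)} = {x} := by
    ext y
    simp only [mem_filter, mem_univ, true_and, mem_singleton]
    rw [← inv_mem_iff (x := g * y⁻¹), mul_inv_rev, inv_inv]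
    exact ⟨hunique y, fun h => h ▸ hx⟩
  rw [coeff_gsum_mul_gsum, hfilter, coeff_gsum]
  simp

theorem eq_of_mul_inv_mem_of_rds {X : Finset G} {k lam : ℕ}
    (hRDS : gsum X * gsum (X.image (·⁻¹)) =
      k • (1 : MonoidAlgebra ℤ G) + lam • (gsum univ - gsum (univ.filter (· ∈ N))))
    {x y : G} (hx : x ∈ X) (hy : y ∈ X) (hxy : x * y⁻¹ ∈ N) : x = y := by
  by_contra hne
  have hpos : 0 < (gsum X * gsum (X.image (·⁻¹))).coeff (x * y⁻¹) := by
    rw [coeff_gsum_mul_gsum, Nat.cast_pos, card_pos]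
    exact ⟨y⁻¹, mem_filter.mpr ⟨mem_image_of_mem _ hy, by simpa using hx⟩⟩
  have hne_one : x * y⁻¹ ≠ 1 := fun h => hne (mul_inv_eq_one.mp h)
  have hzero : (k • (1 : MonoidAlgebra ℤ G) +
      lam • (gsum univ - gsum (univ.filter (· ∈ N)))).coeff (x * y⁻¹) = 0 := by
    simp only [coeff_add, coeff_smul, coeff_sub, Finsupp.add_apply, Finsupp.smul_apply,
      Finsupp.sub_apply, coeff_gsum, one_def, coeff_single, Finsupp.single_apply]
    simp [hxy, hne_one.symm]
  rw [hRDS, hzero] at hpos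
  exact hpos.false

end GroupRing

theorem Subgroup.existsUnique_mul_inv_mem_of_card_eq_index {G : Type*} [Group G]
    {N : Subgroup G} [N.FiniteIndex] {X : Finset G}
    (hX : ∀ x ∈ X, ∀ y ∈ X, x * y⁻¹ ∈ N → x = y) (hcard : #X = N.index) (g : G) :
    ∃! x : G, x ∈ X ∧ x * g⁻¹ ∈ N := by
  let f : X → G ⧸ N := fun x => QuotientGroup.mk (x : G)⁻¹
  have hf : Function.Injective f := fun a b hab => by
    rw [QuotientGroup.eq, inv_inv] at hab
    exact Subtype.ext (hX a a.2 b b.2 hab)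
  have hcard' : Nat.card (G ⧸ N) ≤ Nat.card X := by
    rw [Nat.card_eq_finsetCard, hcard, Subgroup.index]
  obtain ⟨x, hx⟩ := (hf.bijective_of_nat_card_le hcard').surjective (QuotientGroup.mk g⁻¹)
  rw [QuotientGroup.eq, inv_inv] at hx
  refine ⟨x, ⟨x.2, hx⟩, fun y ⟨hy, hyg⟩ => hX y hy x x.2 ?_⟩
  simpa [mul_assoc] using mul_mem hyg (inv_mem hx)

theorem stmt3_general {G : Type*} [Group G] [Fintype G] [DecidableEq G]
    (N : Subgroup G) [DecidablePred (· ∈ N)]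
    (X : Finset G) (lam : ℕ)
    (hRDS : gsum X * gsum (X.image (·⁻¹)) =
      X.card • (1 : MonoidAlgebra ℤ G) +
      lam • (gsum (Finset.univ : Finset G) - gsum (Finset.univ.filter (· ∈ N))))
    (hsemi : X.card = N.index) :
    gsum (Finset.univ.filter (· ∈ N)) * gsum X = gsum (Finset.univ : Finset G) ∧
      ∀ g : G, ∃! x : G, x ∈ X ∧ x * g⁻¹ ∈ N := by
  have htransversal : ∀ g : G, ∃! x : G, x ∈ X ∧ x * g⁻¹ ∈ N :=
    N.existsUnique_mul_inv_mem_of_card_eq_index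
      (fun _ hx _ hy => eq_of_mul_inv_mem_of_rds hRDS hx hy) hsemi
  exact ⟨gsum_filter_mem_mul_gsum_eq_univ htransversal, htransversal⟩

/-- If `X` is a semiregular RDS in a finite group `G` with forbidden subgroup `N`
(i.e. an RDS with `|X| = |G : N|`), then `N·X = G` in `ℤG`; equivalently, `X` is a
right transversal for `N` in `G`: each right coset `Ng` contains exactly one element
of `X`. -/
theorem stmt3 {G : Type*} [Group G] [Fintype G] [DecidableEq G]
    (N : Subgroup G) [DecidablePred (· ∈ N)]
    (X : Finset G) (lam : ℕ) (hlam : 0 < lam)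
    (hRDS : gsum X * gsum (X.image (·⁻¹)) =
      X.card • (1 : MonoidAlgebra ℤ G) +
      lam • (gsum (Finset.univ : Finset G) - gsum (Finset.univ.filter (· ∈ N))))
    (hsemi : X.card = N.index) :
    gsum (Finset.univ.filter (· ∈ N)) * gsum X = gsum (Finset.univ : Finset G) ∧
      ∀ g : G, ∃! x : G, x ∈ X ∧ x * g⁻¹ ∈ N :=
  stmt3_general N X lam hRDS hsemi
end

section
/- Let X ⊆ G be a reversible semiregular RDS with forbidden subgroup N of order n, parameters (nλ, n, nλ, λ), and e ∈ X. If λ = n, then S = X^# ∪ N^# is a reversible partial difference set in G with parameters (n³, n²+n−2, n−2, n+2). -/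
/-!
Semiregularity `X N = G` forces `X ∩ N = {e}`, so `S = X + N - 2e` in `ℤG`. Expanding `S²` with
`X² = n²e + n(G - N)`, `XN = NX = G` and `N² = nN` gives `(n² - 4)e + (n + 2)G - 4S`, which is
the PDS equation with `λ = n - 2`, `μ = n + 2`.
-/

open Finset MonoidAlgebra

theorem pds_identity {R : Type*} [Ring R] (x y g : R) (n : ℤ)
    (hxx : x * x = n ^ 2 • (1 : R) + n • (g - y)) (hxy : x * y = g) (hyx : y * x = g)
    (hyy : y * y = n • y) :
    (x + y - 2) * (x + y - 2) =
      (n ^ 2 + n - 2) • (1 : R) + (n - 2) • (x + y - 2) + (n + 2) • (g - 1 - (x + y - 2)) := by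
  have two : (2 : R) = (2 : ℤ) • 1 := by norm_num
  simp only [two, add_mul, mul_add, sub_mul, mul_sub, smul_mul_assoc, mul_smul_comm, one_mul,
    mul_one, hxx, hxy, hyx, hyy]
  module

namespace gsum

variable {G : Type*} [Group G]

theorem coeff [DecidableEq G] (X : Finset G) (g : G) :
    (gsum X).coeff g = if g ∈ X then 1 else 0 := by
  simp [gsum, MonoidAlgebra.coeff_sum, Finsupp.single_apply]

theorem union [DecidableEq G] {X Y : Finset G} (h : Disjoint X Y) :
    gsum (X ∪ Y) = gsum X + gsum Y :=
  sum_union h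

theorem erase_one [DecidableEq G] {X : Finset G} (h : (1 : G) ∈ X) :
    gsum (X.erase 1) = gsum X - 1 := by
  rw [gsum, gsum, ← add_sum_erase X _ h, MonoidAlgebra.one_def]
  abel

theorem single_mul (a : G) (X : Finset G) :
    single a (1 : ℤ) * gsum X = gsum (X.map (mulLeftEmbedding a)) := by
  simp [gsum, mul_sum, single_mul_single]

theorem mul_eq_sum_map (X Y : Finset G) :
    gsum X * gsum Y = ∑ x ∈ X, gsum (Y.map (mulLeftEmbedding x)) := by
  rw [gsum, sum_mul]
  exact sum_congr rfl fun x _ => single_mul x Y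

theorem coeff_one_mul [DecidableEq G] (X Y : Finset G) :
    (gsum X * gsum Y).coeff 1 = #(X.filter (·⁻¹ ∈ Y)) := by
  have hmem (x : G) : (1 : G) ∈ Y.map (mulLeftEmbedding x) ↔ x⁻¹ ∈ Y := by
    simp [mul_eq_one_iff_eq_inv']
  simp only [mul_eq_sum_map, MonoidAlgebra.coeff_sum, Finsupp.finsetSum_apply, coeff, hmem,
    sum_boole]

end gsum

section Subgroup

variable {G : Type*} [Group G] [Fintype G] (N : Subgroup G) [DecidablePred (· ∈ N)]

theorem card_filter_mem_subgroup : #(univ.filter (· ∈ N)) = Nat.card N := by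
  simp [Nat.card_eq_fintype_card, Fintype.card_subtype]

theorem image_inv_filter_mem_subgroup [DecidableEq G] :
    (univ.filter (· ∈ N)).image (·⁻¹) = univ.filter (· ∈ N) := by
  ext g
  simp only [mem_image, mem_filter, mem_univ, true_and]
  exact ⟨fun ⟨a, ha, h⟩ => h ▸ inv_mem ha, fun h => ⟨g⁻¹, inv_mem h, inv_inv g⟩⟩

theorem map_mulLeft_filter_mem_subgroup {a : G} (ha : a ∈ N) :
    (univ.filter (· ∈ N)).map (mulLeftEmbedding a) = univ.filter (· ∈ N) := by
  ext g
  simp only [mem_map, mem_filter, mem_univ, true_and, mulLeftEmbedding_apply]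
  exact ⟨fun ⟨b, hb, h⟩ => h ▸ mul_mem ha hb,
    fun h => ⟨a⁻¹ * g, mul_mem (inv_mem ha) h, mul_inv_cancel_left a g⟩⟩

theorem gsum_filter_mem_subgroup_mul_self :
    gsum (univ.filter (· ∈ N)) * gsum (univ.filter (· ∈ N)) =
      (Nat.card N : ℤ) • gsum (univ.filter (· ∈ N)) := by
  rw [gsum.mul_eq_sum_map, sum_congr rfl fun a ha =>
      congrArg gsum (map_mulLeft_filter_mem_subgroup N (mem_filter.1 ha).2),
    sum_const, card_filter_mem_subgroup, natCast_zsmul]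

/- The coefficient of `e` in `X N = G` counts the `x ∈ X` with `x⁻¹ ∈ N`, so `e` is the only
element of `X ∩ N`. -/
theorem disjoint_erase_one_of_gsum_mul_eq_gsum_univ [DecidableEq G] {X : Finset G}
    (h1 : (1 : G) ∈ X) (hXN : gsum X * gsum (univ.filter (· ∈ N)) = gsum univ) :
    Disjoint (X.erase 1) ((univ.filter (· ∈ N)).erase 1) := by
  have hcard : #(X.filter (·⁻¹ ∈ univ.filter (· ∈ N))) = 1 := by
    have := congrArg (fun f => f.coeff (1 : G)) hXN
    simp only [gsum.coeff_one_mul, gsum.coeff, mem_univ, if_true] at this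
    exact_mod_cast this
  obtain ⟨a, ha⟩ := card_eq_one.1 hcard
  have mem_a {g : G} (hgX : g ∈ X) (hgN : g ∈ N) : g = a := by
    have hg : g ∈ X.filter (·⁻¹ ∈ univ.filter (· ∈ N)) := mem_filter.2 ⟨hgX, by simpa using hgN⟩
    rwa [ha, mem_singleton] at hg
  rw [disjoint_left]
  intro g hgX hgN
  exact ne_of_mem_erase hgX <|
    (mem_a (mem_of_mem_erase hgX) (mem_filter.1 (mem_of_mem_erase hgN)).2).trans
      (mem_a h1 N.one_mem).symm

end Subgroup

theorem stmt7_general {G : Type*} [Group G] [Fintype G] [DecidableEq G]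
    (N : Subgroup G) [DecidablePred (· ∈ N)]
    (Nfin : Finset G) (hNfin : Nfin = Finset.univ.filter (· ∈ N))
    (n : ℕ) (hn : Nat.card N = n)
    (X : Finset G) (hrev : X.image (·⁻¹) = X) (heX : (1 : G) ∈ X) (hcard : X.card = n ^ 2)
    (hRDS : gsum X * gsum X =
      (n ^ 2) • (1 : MonoidAlgebra ℤ G) + n • (gsum (Finset.univ : Finset G) - gsum Nfin))
    (hsemi1 : gsum Nfin * gsum X = gsum (Finset.univ : Finset G))
    (hsemi2 : gsum X * gsum Nfin = gsum (Finset.univ : Finset G))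
    (S : Finset G) (hS : S = (X.erase 1) ∪ (Nfin.erase 1)) :
    S.image (·⁻¹) = S ∧ S.card = n ^ 2 + n - 2 ∧
      gsum S * gsum S =
        ((n : ℤ) ^ 2 + n - 2) • (1 : MonoidAlgebra ℤ G) + ((n : ℤ) - 2) • gsum S +
          ((n : ℤ) + 2) • (gsum (Finset.univ.erase (1 : G)) - gsum S) := by
  subst hNfin hS
  have h1N : (1 : G) ∈ univ.filter (· ∈ N) := by simp [N.one_mem]
  have hdisj := disjoint_erase_one_of_gsum_mul_eq_gsum_univ N heX hsemi2
  refine ⟨?_, ?_, ?_⟩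
  · rw [image_union, image_erase inv_injective, image_erase inv_injective, hrev,
      image_inv_filter_mem_subgroup, inv_one]
  · have hn1 : 1 ≤ n := hn ▸ Nat.card_pos
    have hn2 : 1 ≤ n ^ 2 := Nat.one_le_pow 2 n hn1
    rw [card_union_of_disjoint hdisj, card_erase_of_mem heX, card_erase_of_mem h1N, hcard,
      card_filter_mem_subgroup, hn]
    omega
  · rw [gsum.union hdisj, gsum.erase_one heX, gsum.erase_one h1N, gsum.erase_one (mem_univ 1),
      sub_add_sub_comm, one_add_one_eq_two]
    refine pds_identity _ _ _ _ ?_ hsemi2 hsemi1 (hn ▸ gsum_filter_mem_subgroup_mul_self N)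
    simpa only [← Nat.cast_smul_eq_nsmul ℤ, Nat.cast_pow] using hRDS

/-- If `X` is a reversible semiregular RDS with `e ∈ X`, forbidden subgroup `N` of order `n`,
parameters `(nλ, n, nλ, λ)` with `λ = n`, then `S = X^# ∪ N^#` is a reversible PDS with
parameters `(n³, n² + n − 2, n − 2, n + 2)`. -/
theorem stmt7 {G : Type*} [Group G] [Fintype G] [DecidableEq G]
    (N : Subgroup G) [DecidablePred (· ∈ N)]
    (Nfin : Finset G) (hNfin : Nfin = Finset.univ.filter (· ∈ N))
    (n : ℕ) (hn : Nat.card N = n) (hG : Fintype.card G = n ^ 3)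
    (X : Finset G) (hrev : X.image (·⁻¹) = X) (heX : (1 : G) ∈ X) (hcard : X.card = n ^ 2)
    (hRDS : gsum X * gsum X =
      (n ^ 2) • (1 : MonoidAlgebra ℤ G) + n • (gsum (Finset.univ : Finset G) - gsum Nfin))
    (hsemi1 : gsum Nfin * gsum X = gsum (Finset.univ : Finset G))
    (hsemi2 : gsum X * gsum Nfin = gsum (Finset.univ : Finset G))
    (S : Finset G) (hS : S = (X.erase 1) ∪ (Nfin.erase 1)) :
    S.image (·⁻¹) = S ∧ S.card = n ^ 2 + n - 2 ∧
      gsum S * gsum S =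
        ((n : ℤ) ^ 2 + n - 2) • (1 : MonoidAlgebra ℤ G) + ((n : ℤ) - 2) • gsum S +
          ((n : ℤ) + 2) • (gsum (Finset.univ.erase (1 : G)) - gsum S) :=
  stmt7_general N Nfin hNfin n hn X hrev heX hcard hRDS hsemi1 hsemi2 S hS
end

section
/- Let q be an odd prime power and G the Heisenberg group of 3×3 upper unitriangular matrices over F_q. For a nonsquare ε ∈ F_q and M = [[α,β],[εβ,α]] with (α,β) ≠ (0,0), the map φ(M) sending the unitriangular matrix with entries (x, y, z) to the one with entries (αx + εβy, βx + αy, F_{α,β}(x,y,z)), where F_{α,β}(x,y,z) = αβ(x²/2 + εy²/2) + εβ²xy + (α² − εβ²)z, is an automorphism of G, and M ↦ φ(M) is an injective group homomorphism from M(ε) into Aut(G). -/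
/-- The Heisenberg group of dimension 3 over a field `F`, with coordinates `(x, y, z)`
corresponding to the unitriangular matrix `[[1,x,z],[0,1,y],[0,0,1]]`. -/
def Heis (F : Type*) := F × F × F

namespace Heis
variable {F : Type*} [Field F]

instance : Mul (Heis F) :=
  ⟨fun a b => (a.1 + b.1, a.2.1 + b.2.1, a.2.2 + b.2.2 + a.1 * b.2.1)⟩
instance : One (Heis F) := ⟨((0 : F), (0 : F), (0 : F))⟩
instance : Inv (Heis F) := ⟨fun a => (-a.1, -a.2.1, -a.2.2 + a.1 * a.2.1)⟩

lemma mul_def (a b : Heis F) :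
    a * b = (a.1 + b.1, a.2.1 + b.2.1, a.2.2 + b.2.2 + a.1 * b.2.1) := rfl
lemma one_def : (1 : Heis F) = ((0 : F), (0 : F), (0 : F)) := rfl
lemma inv_def (a : Heis F) : a⁻¹ = (-a.1, -a.2.1, -a.2.2 + a.1 * a.2.1) := rfl

instance : Group (Heis F) where
  mul_assoc a b c := by
    rw [mul_def, mul_def, mul_def, mul_def]
    exact Prod.ext (by ring) (Prod.ext (by ring) (by ring))
  one_mul a := by
    rw [mul_def, one_def]
    obtain ⟨x, y, z⟩ := a
    exact Prod.ext (by simp) (Prod.ext (by simp) (by simp))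
  mul_one a := by
    rw [mul_def, one_def]
    obtain ⟨x, y, z⟩ := a
    exact Prod.ext (by simp) (Prod.ext (by simp) (by simp))
  inv_mul_cancel a := by
    rw [mul_def, inv_def, one_def]
    obtain ⟨x, y, z⟩ := a
    exact Prod.ext (by simp) (Prod.ext (by simp) (by ring))

instance [DecidableEq F] : DecidableEq (Heis F) :=
  inferInstanceAs (DecidableEq (F × F × F))

instance [Fintype F] : Fintype (Heis F) :=
  inferInstanceAs (Fintype (F × F × F))

end Heis

open Heis

/-- The cyclotomic action map `φ(M)` on the Heisenberg group, for
`M = [[α, β],[εβ, α]]`. -/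
def phiFun {F : Type*} [Field F] (ε α β : F) : Heis F → Heis F := fun g =>
  (α * g.1 + ε * β * g.2.1,
   β * g.1 + α * g.2.1,
   α * β * (g.1 ^ 2 / 2 + ε * g.2.1 ^ 2 / 2) + ε * β ^ 2 * g.1 * g.2.1 +
     (α ^ 2 - ε * β ^ 2) * g.2.2)

/-!
Identify `(α, β)` with `α + β√ε` in the quadratic extension `F(√ε)`. A direct computation shows
`φ(α₁, β₁) ∘ φ(α₂, β₂) = φ((α₁ + β₁√ε)(α₂ + β₂√ε))` and `φ(1, 0) = id`; the quadratic term
`F_{α,β}` is exactly what makes `φ(α, β)` compatible with the cocycle `x y'` of the group law,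
which requires `2` to be invertible. So `φ(α, β)` is inverted by `φ` of `(α - β√ε) / N` with
`N = α² - εβ²` the norm, which vanishes only at `(0, 0)` because `ε` is a nonsquare.
Injectivity is read off the image of `(1, 0, 0)`, which is `(α, β, αβ/2)`.
-/

section
variable {F : Type*} [Field F]

lemma two_ne_zero_of_odd_card [Fintype F] (hodd : Odd (Fintype.card F)) : (2 : F) ≠ 0 :=
  Ring.two_ne_zero fun h => by
    simpa [FiniteField.even_card_iff_char_two.mp h] using Nat.odd_iff.mp hodd

lemma sq_sub_mul_sq_ne_zero {ε α β : F} (hε : ∀ γ : F, γ ^ 2 ≠ ε) (hαβ : (α, β) ≠ (0, 0)) :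
    α ^ 2 - ε * β ^ 2 ≠ 0 := by
  intro h
  rcases eq_or_ne β 0 with rfl | hβ
  · exact hαβ (by simpa using h)
  · exact hε (α / β) (by field_simp; linear_combination h)

variable (ε : F)

lemma phiFun_mul (h2 : (2 : F) ≠ 0) (α β : F) (g h : Heis F) :
    phiFun ε α β (g * h) = phiFun ε α β g * phiFun ε α β h := by
  rw [Heis.mul_def, Heis.mul_def]
  obtain ⟨x, y, z⟩ := g
  obtain ⟨u, v, w⟩ := h
  simp only [phiFun]
  refine Prod.ext (by ring) (Prod.ext (by ring) ?_)
  field_simp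
  ring

lemma phiFun_comp (h2 : (2 : F) ≠ 0) (α₁ β₁ α₂ β₂ : F) :
    phiFun ε α₁ β₁ ∘ phiFun ε α₂ β₂ =
      phiFun ε (α₁ * α₂ + ε * β₁ * β₂) (α₁ * β₂ + β₁ * α₂) := by
  funext g
  show phiFun ε α₁ β₁ (phiFun ε α₂ β₂ g) = _
  simp only [phiFun]
  refine Prod.ext (by ring) (Prod.ext (by ring) ?_)
  field_simp
  ring

lemma phiFun_one_zero : phiFun ε 1 0 = id := by
  funext ⟨x, y, z⟩
  change (_ : F × F × F) = (x, y, z)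
  simp [phiFun]

lemma phiFun_comp_phiFun_inv (h2 : (2 : F) ≠ 0) {α β : F} (hd : α ^ 2 - ε * β ^ 2 ≠ 0) :
    phiFun ε (α / (α ^ 2 - ε * β ^ 2)) (-β / (α ^ 2 - ε * β ^ 2)) ∘ phiFun ε α β = id ∧
      phiFun ε α β ∘ phiFun ε (α / (α ^ 2 - ε * β ^ 2)) (-β / (α ^ 2 - ε * β ^ 2)) = id := by
  rw [phiFun_comp ε h2, phiFun_comp ε h2, ← phiFun_one_zero ε]
  constructor <;> congr 1 <;> field_simp <;> ring

lemma phiFun_injective2 : Function.Injective2 (phiFun ε) := fun _ _ _ _ h => by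
  simpa [phiFun] using congrArg (fun g : Heis F => (g.1, g.2.1)) (congrFun h (1, 0, 0))

def phiMulEquiv (h2 : (2 : F) ≠ 0) {α β : F} (hd : α ^ 2 - ε * β ^ 2 ≠ 0) :
    Heis F ≃* Heis F where
  toFun := phiFun ε α β
  invFun := phiFun ε (α / (α ^ 2 - ε * β ^ 2)) (-β / (α ^ 2 - ε * β ^ 2))
  left_inv := congrFun (phiFun_comp_phiFun_inv ε h2 hd).1
  right_inv := congrFun (phiFun_comp_phiFun_inv ε h2 hd).2
  map_mul' := phiFun_mul ε h2 α β

end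

/-- For an odd prime power `q` and a nonsquare `ε ∈ F_q`, each map `φ(M)` (for
`M = [[α,β],[εβ,α]]` with `(α,β) ≠ (0,0)`) is an automorphism of the Heisenberg group
over `F_q`, and `M ↦ φ(M)` is an injective group homomorphism from `M(ε)` into `Aut(G)`. -/
theorem stmt11 {F : Type*} [Field F] [Fintype F] (q : ℕ) (hq : Fintype.card F = q)
    (hodd : Odd q) (ε : F) (hε : ∀ γ : F, γ ^ 2 ≠ ε) :
    (∀ α β : F, (α, β) ≠ (0, 0) → ∃ φ : Heis F ≃* Heis F, ⇑φ = phiFun ε α β) ∧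
    (∀ α₁ β₁ α₂ β₂ : F, (α₁, β₁) ≠ (0, 0) → (α₂, β₂) ≠ (0, 0) →
      ∀ A : Matrix (Fin 2) (Fin 2) F,
        A = !![α₁, β₁; ε * β₁, α₁] * !![α₂, β₂; ε * β₂, α₂] →
        phiFun ε (A 0 0) (A 0 1) = phiFun ε α₁ β₁ ∘ phiFun ε α₂ β₂) ∧
    (∀ α₁ β₁ α₂ β₂ : F, (α₁, β₁) ≠ (0, 0) → (α₂, β₂) ≠ (0, 0) →
      phiFun ε α₁ β₁ = phiFun ε α₂ β₂ → (α₁, β₁) = (α₂, β₂)) := by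
  have h2 : (2 : F) ≠ 0 := two_ne_zero_of_odd_card (hq ▸ hodd)
  refine ⟨fun α β hαβ => ⟨phiMulEquiv ε h2 (sq_sub_mul_sq_ne_zero hε hαβ), rfl⟩, ?_,
    fun _ _ _ _ _ _ h => Prod.ext_iff.2 (phiFun_injective2 ε h)⟩
  rintro α₁ β₁ α₂ β₂ - - A rfl
  rw [phiFun_comp ε h2, Matrix.mul_fin_two]
  congr 1
  simp only [Matrix.of_apply, Matrix.cons_val', Matrix.cons_val_zero, Matrix.cons_val_fin_one]
  ring
end

section
/- Let q be an odd prime power and δ ∈ F_q a nonsquare. Define on F_q^∞ = F_q ∪ {∞} the operation: i * j = (ij + δ)/(i + j) for i, j ∈ F_q with i + j ≠ 0; i * (−i) = ∞; i * ∞ = ∞ * i = i; ∞ * ∞ = ∞. Then (F_q^∞, *) is a cyclic group of order q + 1 with identity ∞ and inversion i ↦ −i. -/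
/-!
Let `K = F(√δ)`, a field since `δ` is a nonsquare. Sending `x + y√δ ∈ Kˣ` to the point `x / y`
of `F ∪ {∞}` (to `∞` when `y = 0`) is surjective, and a direct computation shows that it carries
multiplication in `K` to the given operation. So the operation is associative, and `F ∪ {∞}` is
the image of the cyclic group `Kˣ` (in fact it is `Kˣ / Fˣ`), hence cyclic.
-/

section Transport

variable {G X : Type*} {mul : X → X → X} {ψ : G → X}

theorem assoc_of_surjective_of_map_mul [Semigroup G] (hψ : Function.Surjective ψ)
    (hmul : ∀ u v, ψ (u * v) = mul (ψ u) (ψ v)) (a b c : X) :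
    mul (mul a b) c = mul a (mul b c) := by
  obtain ⟨u, rfl⟩ := hψ a
  obtain ⟨v, rfl⟩ := hψ b
  obtain ⟨w, rfl⟩ := hψ c
  simp only [← hmul, mul_assoc]

theorem map_pow_eq_iterate [Monoid G] (hmul : ∀ u v, ψ (u * v) = mul (ψ u) (ψ v)) (g : G) (k : ℕ) :
    ψ (g ^ k) = (mul (ψ g))^[k] (ψ 1) := by
  induction k with
  | zero => rw [pow_zero, Function.iterate_zero_apply]
  | succ k ih => rw [Function.iterate_succ_apply', ← ih, pow_succ', hmul]

theorem exists_iterate_eq_of_surjective_of_map_mul [Group G] [Finite G] [IsCyclic G]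
    (hψ : Function.Surjective ψ) (hmul : ∀ u v, ψ (u * v) = mul (ψ u) (ψ v)) :
    ∃ x, ∀ y, ∃ k : ℕ, y = (mul x)^[k] (ψ 1) := by
  obtain ⟨g, hg⟩ := IsCyclic.exists_monoid_generator (α := G)
  refine ⟨ψ g, fun y => ?_⟩
  obtain ⟨u, rfl⟩ := hψ y
  obtain ⟨k, rfl⟩ := Submonoid.mem_powers_iff _ _ |>.mp (hg u)
  exact ⟨k, map_pow_eq_iterate hmul g k⟩

end Transport

namespace QuadraticAlgebra

variable {F : Type*} [Field F] [DecidableEq F] {δ : F}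

def toProjLine (z : QuadraticAlgebra F δ 0) : Option F :=
  if z.im = 0 then none else some (z.re / z.im)

theorem toProjLine_one : toProjLine (1 : QuadraticAlgebra F δ 0) = none := by
  simp [toProjLine]

theorem toProjLine_mk_one (i : F) : toProjLine (⟨i, 1⟩ : QuadraticAlgebra F δ 0) = some i := by
  simp [toProjLine]

theorem toProjLine_of_im_eq_zero {z : QuadraticAlgebra F δ 0} (hz : z.im = 0) :
    toProjLine z = none := by
  simp [toProjLine, hz]

theorem toProjLine_of_im_ne_zero {z : QuadraticAlgebra F δ 0} (hz : z.im ≠ 0) :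
    toProjLine z = some (z.re / z.im) := by
  simp [toProjLine, hz]

theorem toProjLine_mul_of_im_eq_zero {z : QuadraticAlgebra F δ 0} (hz : z ≠ 0) (hzi : z.im = 0)
    (w : QuadraticAlgebra F δ 0) : toProjLine (z * w) = toProjLine w := by
  have hzr : z.re ≠ 0 := fun hzr => hz (QuadraticAlgebra.ext hzr hzi)
  simp only [toProjLine, im_mul, re_mul, hzi, mul_zero, zero_mul, add_zero, mul_eq_zero, hzr,
    false_or, mul_div_mul_left _ _ hzr]

theorem surjective_toProjLine_units [Fact (∀ r : F, r ^ 2 ≠ δ + 0 * r)] :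
    Function.Surjective fun u : (QuadraticAlgebra F δ 0)ˣ => toProjLine (u : QuadraticAlgebra F δ 0)
  | none => ⟨1, toProjLine_one⟩
  | some i => ⟨Units.mk0 ⟨i, 1⟩ fun h => one_ne_zero congr(($h).im), toProjLine_mk_one i⟩

section Hom

variable {mul : Option F → Option F → Option F}
  (h1 : ∀ i j : F, i + j ≠ 0 → mul (some i) (some j) = some ((i * j + δ) / (i + j)))
  (h2 : ∀ i : F, mul (some i) (some (-i)) = none)
  (h3 : ∀ a, mul a none = a) (h4 : ∀ a, mul none a = a)
include h1 h2

theorem toProjLine_mul_of_im_ne_zero {z w : QuadraticAlgebra F δ 0} (hz : z.im ≠ 0)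
    (hw : w.im ≠ 0) : toProjLine (z * w) = mul (toProjLine z) (toProjLine w) := by
  rw [toProjLine_of_im_ne_zero hz, toProjLine_of_im_ne_zero hw, toProjLine]
  by_cases hzw : (z * w).im = 0
  · have : w.re / w.im = -(z.re / z.im) := by
      field_simp
      linear_combination (by simpa [mul_comm] using hzw : z.re * w.im + z.im * w.re = 0)
    rw [if_pos hzw, this, h2]
  · have hsum : z.re / z.im + w.re / w.im ≠ 0 := by
      contrapose! hzw
      field_simp at hzw
      simp only [im_mul, zero_mul, add_zero]
      linear_combination hzw
    rw [if_neg hzw, h1 _ _ hsum]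
    congr 1
    simp only [re_mul, im_mul, zero_mul, add_zero]
    field_simp

include h3 h4

theorem toProjLine_mul {z w : QuadraticAlgebra F δ 0} (hz : z ≠ 0) (hw : w ≠ 0) :
    toProjLine (z * w) = mul (toProjLine z) (toProjLine w) := by
  by_cases hzi : z.im = 0
  · rw [toProjLine_mul_of_im_eq_zero hz hzi, toProjLine_of_im_eq_zero hzi, h4]
  by_cases hwi : w.im = 0
  · rw [mul_comm, toProjLine_mul_of_im_eq_zero hw hwi, toProjLine_of_im_eq_zero hwi, h3]
  exact toProjLine_mul_of_im_ne_zero h1 h2 hzi hwi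

end Hom

end QuadraticAlgebra

open QuadraticAlgebra in
theorem stmt16_general {F : Type*} [Field F] [Fintype F] [DecidableEq F]
    (q : ℕ) (hq : Fintype.card F = q)
    (δ : F) (hδ : ∀ γ : F, γ ^ 2 ≠ δ)
    (mul : Option F → Option F → Option F)
    (h1 : ∀ i j : F, i + j ≠ 0 → mul (some i) (some j) = some ((i * j + δ) / (i + j)))
    (h2 : ∀ i : F, mul (some i) (some (-i)) = none)
    (h3 : ∀ a, mul a none = a) (h4 : ∀ a, mul none a = a) :
    (∀ a b c, mul (mul a b) c = mul a (mul b c)) ∧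
    (∀ a, mul a (Option.map (fun i : F => -i) a) = none ∧
      mul (Option.map (fun i : F => -i) a) a = none) ∧
    Fintype.card (Option F) = q + 1 ∧
    (∃ x : Option F, ∀ y : Option F, ∃ k : ℕ, y = (fun z => mul x z)^[k] none) := by
  have : Fact (∀ r : F, r ^ 2 ≠ δ + 0 * r) := ⟨by simpa using hδ⟩
  have : Finite (QuadraticAlgebra F δ 0) := Module.finite_of_finite F
  have hψ (u v : (QuadraticAlgebra F δ 0)ˣ) :
      toProjLine ((u * v : (QuadraticAlgebra F δ 0)ˣ) : QuadraticAlgebra F δ 0) =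
        mul (toProjLine (u : QuadraticAlgebra F δ 0)) (toProjLine (v : QuadraticAlgebra F δ 0)) :=
    toProjLine_mul h1 h2 h3 h4 u.ne_zero v.ne_zero
  refine ⟨assoc_of_surjective_of_map_mul surjective_toProjLine_units hψ, ?_,
    by rw [Fintype.card_option, hq], ?_⟩
  · rintro (_ | i)
    · exact ⟨h3 none, h3 none⟩
    · exact ⟨h2 i, by simpa using h2 (-i)⟩
  · simpa [toProjLine_one] using
      exists_iterate_eq_of_surjective_of_map_mul surjective_toProjLine_units hψ

/-- For `q` an odd prime power and a nonsquare `δ ∈ F_q`, the set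
`F_q^∞ = F_q ∪ {∞}` (modelled as `Option F`, with `∞ = none`) equipped with the
operation `i * j = (ij + δ)/(i + j)` for `i + j ≠ 0`, `i * (−i) = ∞`,
`i * ∞ = ∞ * i = i`, `∞ * ∞ = ∞`, is a cyclic group of order `q + 1` with identity `∞`
and inversion `i ↦ −i`. -/
theorem stmt16 {F : Type*} [Field F] [Fintype F] [DecidableEq F]
    (q : ℕ) (hq : Fintype.card F = q) (hodd : Odd q)
    (δ : F) (hδ : ∀ γ : F, γ ^ 2 ≠ δ)
    (mul : Option F → Option F → Option F)
    (h1 : ∀ i j : F, i + j ≠ 0 → mul (some i) (some j) = some ((i * j + δ) / (i + j)))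
    (h2 : ∀ i : F, mul (some i) (some (-i)) = none)
    (h3 : ∀ a, mul a none = a) (h4 : ∀ a, mul none a = a) :
    (∀ a b c, mul (mul a b) c = mul a (mul b c)) ∧
    (∀ a, mul a (Option.map (fun i : F => -i) a) = none ∧
      mul (Option.map (fun i : F => -i) a) a = none) ∧
    Fintype.card (Option F) = q + 1 ∧
    (∃ x : Option F, ∀ y : Option F, ∃ k : ℕ, y = (fun z => mul x z)^[k] none) :=
  stmt16_general q hq δ hδ mul h1 h2 h3 h4
end
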